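/- arXiv:2603.23188 — 7 statements merged into one kernel-verified Lean document; each statement's English description precedes it below -/
import Mathlib

section
/- For quadratic polynomials p and q over ℂ, the discriminant of the polynomial bracket [p,q] = p'q - pq' equals 4 times the resultant of p and q, where for p(x)=p₂x²+p₁x+p₀ we set Discr(p)=p₁²-4p₀p₂ and Res(p,q)=(p₂q₀-p₀q₂)²+(p₂q₁-p₁q₂)(p₀q₁-p₁q₀). -/
open Polynomial

/-- The polynomial bracket `[p,q] = p'q - pq'`. -/
noncomputable def pbr (p q : ℂ[X]) : ℂ[X] := derivative p * q - p * derivative q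

/-- `Discr(p) = p₁² - 4 p₀ p₂` for `p = p₂x² + p₁x + p₀`. -/
noncomputable def pdiscr (p : ℂ[X]) : ℂ := (p.coeff 1) ^ 2 - 4 * p.coeff 0 * p.coeff 2

/-- `Res(p,q) = (p₂q₀ - p₀q₂)² + (p₂q₁ - p₁q₂)(p₀q₁ - p₁q₀)`. -/
noncomputable def pres (p q : ℂ[X]) : ℂ :=
  (p.coeff 2 * q.coeff 0 - p.coeff 0 * q.coeff 2) ^ 2 +
    (p.coeff 2 * q.coeff 1 - p.coeff 1 * q.coeff 2) *
      (p.coeff 0 * q.coeff 1 - p.coeff 1 * q.coeff 0)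

namespace Polynomial

variable {R : Type*} [CommRing R]

theorem derivative_mul_sub_mul_derivative_quadratic (a b c d e f : R) :
    derivative (C a * X ^ 2 + C b * X + C c) * (C d * X ^ 2 + C e * X + C f) -
        (C a * X ^ 2 + C b * X + C c) * derivative (C d * X ^ 2 + C e * X + C f) =
      C (a * e - b * d) * X ^ 2 + C (2 * (a * f - c * d)) * X + C (b * f - c * e) := by
  simp only [derivative_add, derivative_C_mul_X_pow, derivative_C_mul_X, derivative_C,
    Nat.cast_ofNat, map_sub, map_mul, map_ofNat]
  ring

end Polynomial

theorem pbr_eq_quadratic {p q : ℂ[X]} (hp : p.degree ≤ 2) (hq : q.degree ≤ 2) :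
    pbr p q = C (p.coeff 2 * q.coeff 1 - p.coeff 1 * q.coeff 2) * X ^ 2 +
      C (2 * (p.coeff 2 * q.coeff 0 - p.coeff 0 * q.coeff 2)) * X +
      C (p.coeff 1 * q.coeff 0 - p.coeff 0 * q.coeff 1) := by
  rw [← derivative_mul_sub_mul_derivative_quadratic, pbr]
  conv_lhs => rw [eq_quadratic_of_degree_le_two hp, eq_quadratic_of_degree_le_two hq]

theorem pdiscr_quadratic (a b c : ℂ) :
    pdiscr (C a * X ^ 2 + C b * X + C c) = b ^ 2 - 4 * c * a := by
  simp [pdiscr, coeff_X, coeff_X_pow]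

theorem discr_pbr_eq_four_res (p q : ℂ[X]) (hp : p.degree ≤ 2) (hq : q.degree ≤ 2) :
    pdiscr (pbr p q) = 4 * pres p q := by
  rw [pbr_eq_quadratic hp hq, pdiscr_quadratic, pres]
  ring
end

section
/- Let p,q,r be complex polynomials of degree ≤ 2 and set p̂=[q,r], q̂=[r,p], r̂=[p,q] where [u,v]=u'v-uv'. Then [p̂,q̂] = -2Δ(p,q,r)·r, [q̂,r̂] = -2Δ(p,q,r)·p, and [r̂,p̂] = -2Δ(p,q,r)·q, where Δ(p,q,r) is the determinant of the 3×3 matrix of coefficients of p,q,r. -/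
/-!
In the coordinates `p = a₂X² + a₁X + a₀` the bracket `[p,q]` is a twisted cross product of the
coefficient vectors (`pbr_quadratic`), so the identities are twisted forms of the double cross
product identity `(q × r) × (r × p) = Δ(p,q,r) r`, i.e. polynomial identities in nine
coefficients. The second and third identities are the first one for the cyclic rotations of
`(p,q,r)`, under which `Δ` is invariant.
-/

open Polynomial

/-- `Δ(p,q,r)`: determinant of the 3×3 matrix of coefficients of `p, q, r`. -/
noncomputable def pdelta (p q r : ℂ[X]) : ℂ :=
  Matrix.det !![p.coeff 0, q.coeff 0, r.coeff 0;
                p.coeff 1, q.coeff 1, r.coeff 1;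
                p.coeff 2, q.coeff 2, r.coeff 2]

lemma pdelta_eq (p q r : ℂ[X]) :
    pdelta p q r = p.coeff 0 * (q.coeff 1 * r.coeff 2 - q.coeff 2 * r.coeff 1)
      - q.coeff 0 * (p.coeff 1 * r.coeff 2 - p.coeff 2 * r.coeff 1)
      + r.coeff 0 * (p.coeff 1 * q.coeff 2 - p.coeff 2 * q.coeff 1) := by
  rw [pdelta, Matrix.det_fin_three]
  simp only [Matrix.of_apply, Matrix.cons_val', Matrix.cons_val_zero, Matrix.cons_val_one,
    Matrix.cons_val_two, Matrix.empty_val', Matrix.cons_val_fin_one, Matrix.head_cons,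
    Matrix.tail_cons, Matrix.head_fin_const]
  ring

lemma pdelta_rotate (p q r : ℂ[X]) : pdelta q r p = pdelta p q r := by
  rw [pdelta_eq, pdelta_eq]
  ring

lemma pbr_quadratic (a₂ a₁ a₀ b₂ b₁ b₀ : ℂ) :
    pbr (C a₂ * X ^ 2 + C a₁ * X + C a₀) (C b₂ * X ^ 2 + C b₁ * X + C b₀) =
      C (a₂ * b₁ - a₁ * b₂) * X ^ 2 + C (2 * (a₂ * b₀ - a₀ * b₂)) * X + C (a₁ * b₀ - a₀ * b₁) := by
  simp only [pbr, derivative_add, derivative_mul, derivative_C, derivative_X, derivative_X_pow,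
    map_mul, map_sub, map_ofNat, C_eq_natCast]
  push_cast
  ring

lemma pdelta_quadratic (a₂ a₁ a₀ b₂ b₁ b₀ c₂ c₁ c₀ : ℂ) :
    pdelta (C a₂ * X ^ 2 + C a₁ * X + C a₀) (C b₂ * X ^ 2 + C b₁ * X + C b₀)
        (C c₂ * X ^ 2 + C c₁ * X + C c₀) =
      a₀ * (b₁ * c₂ - b₂ * c₁) - b₀ * (a₁ * c₂ - a₂ * c₁) + c₀ * (a₁ * b₂ - a₂ * b₁) := by
  simp [pdelta_eq, coeff_X, coeff_C]

lemma pbr_pbr_pbr_of_degree_le_two {p q r : ℂ[X]}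
    (hp : p.degree ≤ 2) (hq : q.degree ≤ 2) (hr : r.degree ≤ 2) :
    pbr (pbr q r) (pbr r p) = C (-2 * pdelta p q r) * r := by
  obtain ⟨a₂, a₁, a₀, rfl⟩ : ∃ a₂ a₁ a₀, p = C a₂ * X ^ 2 + C a₁ * X + C a₀ :=
    ⟨_, _, _, eq_quadratic_of_degree_le_two hp⟩
  obtain ⟨b₂, b₁, b₀, rfl⟩ : ∃ b₂ b₁ b₀, q = C b₂ * X ^ 2 + C b₁ * X + C b₀ :=
    ⟨_, _, _, eq_quadratic_of_degree_le_two hq⟩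
  obtain ⟨c₂, c₁, c₀, rfl⟩ : ∃ c₂ c₁ c₀, r = C c₂ * X ^ 2 + C c₁ * X + C c₀ :=
    ⟨_, _, _, eq_quadratic_of_degree_le_two hr⟩
  rw [pbr_quadratic, pbr_quadratic, pbr_quadratic, pdelta_quadratic]
  simp only [map_mul, map_sub, map_add, map_neg, map_ofNat]
  ring

theorem pbr_hat_identities (p q r : ℂ[X])
    (hp : p.degree ≤ 2) (hq : q.degree ≤ 2) (hr : r.degree ≤ 2) :
    pbr (pbr q r) (pbr r p) = C (-2 * pdelta p q r) * r ∧
    pbr (pbr r p) (pbr p q) = C (-2 * pdelta p q r) * p ∧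
    pbr (pbr p q) (pbr q r) = C (-2 * pdelta p q r) * q := by
  refine ⟨pbr_pbr_pbr_of_degree_le_two hp hq hr, ?_, ?_⟩
  · rw [← pdelta_rotate]
    exact pbr_pbr_pbr_of_degree_le_two hq hr hp
  · rw [pdelta_rotate r p q]
    exact pbr_pbr_pbr_of_degree_le_two hr hp hq
end

section
/- Let p,q,r be complex polynomials of degree ≤ 2 and set p̂=[q,r], q̂=[r,p], r̂=[p,q]. Then Δ(p̂,q̂,r̂) = -2·Δ(p,q,r)², where Δ denotes the determinant of the coefficient matrix. -/
open Polynomial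
open scoped Matrix

/-!
The coefficients of `[q,r]` are 2×2 minors of the coefficient matrix `M` of `p, q, r`, taken
in its `q, r` columns. Hence the coefficient matrix of `p̂, q̂, r̂` is the transposed adjugate
of `M` with its rows reversed and scaled by `-1, 2, -1`; the determinant of that
transformation is `-2`, and `det (adj M) = (det M)²` for 3×3 matrices.
-/

noncomputable def coeffMatrix (p q r : ℂ[X]) : Matrix (Fin 3) (Fin 3) ℂ :=
  !![p.coeff 0, q.coeff 0, r.coeff 0;
     p.coeff 1, q.coeff 1, r.coeff 1;
     p.coeff 2, q.coeff 2, r.coeff 2]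

theorem pdelta_eq_det_coeffMatrix (p q r : ℂ[X]) : pdelta p q r = (coeffMatrix p q r).det := rfl

theorem pbr_coeff_zero (p q : ℂ[X]) :
    (pbr p q).coeff 0 = p.coeff 1 * q.coeff 0 - p.coeff 0 * q.coeff 1 := by
  simp [pbr, coeff_mul, coeff_derivative]

theorem pbr_coeff_one (p q : ℂ[X]) :
    (pbr p q).coeff 1 = 2 * (p.coeff 2 * q.coeff 0 - p.coeff 0 * q.coeff 2) := by
  simp [pbr, coeff_mul, Finset.Nat.sum_antidiagonal_eq_sum_range_succ_mk,
    Finset.sum_range_succ, coeff_derivative]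
  ring

theorem pbr_coeff_two {p q : ℂ[X]} (hp : p.degree ≤ 2) (hq : q.degree ≤ 2) :
    (pbr p q).coeff 2 = p.coeff 2 * q.coeff 1 - p.coeff 1 * q.coeff 2 := by
  have hp3 : p.coeff 3 = 0 := coeff_eq_zero_of_degree_lt (hp.trans_lt (by norm_num))
  have hq3 : q.coeff 3 = 0 := coeff_eq_zero_of_degree_lt (hq.trans_lt (by norm_num))
  simp [pbr, coeff_mul, Finset.Nat.sum_antidiagonal_eq_sum_range_succ_mk,
    Finset.sum_range_succ, coeff_derivative, hp3, hq3]
  ring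

theorem coeffMatrix_pbr {p q r : ℂ[X]} (hp : p.degree ≤ 2) (hq : q.degree ≤ 2)
    (hr : r.degree ≤ 2) :
    coeffMatrix (pbr q r) (pbr r p) (pbr p q) =
      !![0, 0, -1; 0, 2, 0; -1, 0, 0] * (coeffMatrix p q r).adjugateᵀ := by
  rw [coeffMatrix, coeffMatrix, Matrix.adjugate_fin_three]
  simp only [pbr_coeff_zero, pbr_coeff_one, pbr_coeff_two hq hr, pbr_coeff_two hr hp,
    pbr_coeff_two hp hq]
  ext i j
  fin_cases i <;> fin_cases j <;> simp [Matrix.mul_apply, Fin.sum_univ_three] <;> ring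

theorem pdelta_hat (p q r : ℂ[X])
    (hp : p.degree ≤ 2) (hq : q.degree ≤ 2) (hr : r.degree ≤ 2) :
    pdelta (pbr q r) (pbr r p) (pbr p q) = -2 * (pdelta p q r) ^ 2 := by
  have hdet : Matrix.det !![(0 : ℂ), 0, -1; 0, 2, 0; -1, 0, 0] = -2 := by
    simp [Matrix.det_fin_three]
  rw [pdelta_eq_det_coeffMatrix, coeffMatrix_pbr hp hq hr, Matrix.det_mul, Matrix.det_transpose,
    Matrix.det_adjugate, hdet, pdelta_eq_det_coeffMatrix, Fintype.card_fin]
end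

section
/- Let p(x) = (x-e₁)(x-e₂) and q(x) = (x-h₁)(x-h₂) with Re e₁ > 0, Re e₂ > 0, Re h₁ < 0, Re h₂ < 0. Then the polynomial [p,q] = p'q - pq' is a quadratic with nonzero leading coefficient and has exactly one root with positive real part and one root with negative real part. -/
/-!
Comparing coefficients, the roots `z₁, z₂` of `[p,q]` satisfy
`(z₁ - h₁)(z₂ - h₂) + (z₁ - h₂)(z₂ - h₁) = 0`, i.e. `φ z₁ = -φ z₂` for the Möbius map
`φ z = (z - h₁)/(z - h₂)`. When `Re h₁, Re h₂ < 0`, `φ` maps the closed right half-plane into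
the open half-plane `{w | 0 < Re (μ w)}` with `μ = -(conj h₁ + h₂)`, which is disjoint from its
negative; so `z₁, z₂` are not both in the closed right half-plane. The same identity holds
with `e₁, e₂` in place of `h₁, h₂`, so they are not both in the closed left half-plane either.
-/

open Polynomial ComplexConjugate

lemma pbr_X_sub_C_mul_X_sub_C (e₁ e₂ h₁ h₂ : ℂ) :
    pbr ((X - C e₁) * (X - C e₂)) ((X - C h₁) * (X - C h₂)) =
      C (e₁ + e₂ - h₁ - h₂) * X ^ 2 + C (2 * (h₁ * h₂ - e₁ * e₂)) * X +
        C (e₁ * e₂ * (h₁ + h₂) - h₁ * h₂ * (e₁ + e₂)) := by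
  simp only [pbr, derivative_mul, derivative_X_sub_C]
  simp only [map_add, map_sub, map_mul, map_ofNat]
  ring

lemma exists_mul_add_eq_neg_and_mul_mul_eq {K : Type*} [Field K] [IsAlgClosed K] {a : K}
    (ha : a ≠ 0) (b c : K) : ∃ z₁ z₂ : K, a * (z₁ + z₂) = -b ∧ a * (z₁ * z₂) = c := by
  obtain ⟨z, hz⟩ := IsAlgClosed.exists_root (C a * X ^ 2 + C b * X + C c)
    (by rw [degree_quadratic ha]; decide)
  simp only [IsRoot, eval_add, eval_mul, eval_C, eval_pow, eval_X] at hz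
  refine ⟨z, -b / a - z, by field_simp; ring, ?_⟩
  field_simp
  linear_combination -hz

lemma quadratic_eq_C_mul_X_sub_C_mul_X_sub_C {R : Type*} [CommRing R] {a b c z₁ z₂ : R}
    (hsum : a * (z₁ + z₂) = -b) (hprod : a * (z₁ * z₂) = c) :
    C a * X ^ 2 + C b * X + C c = C a * (X - C z₁) * (X - C z₂) := by
  rw [← neg_neg b, ← hsum, ← hprod]
  simp only [map_neg, map_mul, map_add]
  ring

lemma re_mul_sub_mul_conj_sub_pos {h₁ h₂ z : ℂ} (hh₁ : h₁.re < 0) (hh₂ : h₂.re < 0)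
    (hz : 0 ≤ z.re) : 0 < (-(conj h₁ + h₂) * (z - h₁) * conj (z - h₂)).re := by
  simp only [Complex.mul_re, Complex.mul_im, Complex.sub_re, Complex.sub_im, Complex.neg_re,
    Complex.neg_im, Complex.add_re, Complex.add_im, Complex.conj_re, Complex.conj_im]
  nlinarith [mul_nonneg hz (sq_nonneg (h₂.im - h₁.im)),
    mul_nonneg (neg_nonneg.2 hh₂.le) (sq_nonneg (z.im - h₁.im)),
    mul_nonneg (neg_nonneg.2 hh₁.le) (sq_nonneg (z.im - h₂.im)),
    mul_pos (mul_pos (neg_pos.2 (add_neg hh₁ hh₂)) (sub_pos.2 (hh₁.trans_le hz)))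
      (sub_pos.2 (hh₂.trans_le hz))]

lemma re_neg_or_re_neg_of_polar_eq_zero {h₁ h₂ z₁ z₂ : ℂ} (hh₁ : h₁.re < 0) (hh₂ : h₂.re < 0)
    (hpolar : (z₁ - h₁) * (z₂ - h₂) + (z₁ - h₂) * (z₂ - h₁) = 0) :
    z₁.re < 0 ∨ z₂.re < 0 := by
  by_contra! hz
  obtain ⟨hz₁, hz₂⟩ := hz
  set μ := -(conj h₁ + h₂)
  have hne₁ : z₁ - h₂ ≠ 0 := fun h ↦ by
    rw [sub_eq_zero.1 h] at hz₁; exact hz₁.not_gt hh₂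
  have hne₂ : z₂ - h₂ ≠ 0 := fun h ↦ by
    rw [sub_eq_zero.1 h] at hz₂; exact hz₂.not_gt hh₂
  have key : (Complex.normSq (z₂ - h₂) : ℂ) * (μ * (z₁ - h₁) * conj (z₁ - h₂)) +
      (Complex.normSq (z₁ - h₂) : ℂ) * (μ * (z₂ - h₁) * conj (z₂ - h₂)) = 0 := by
    rw [Complex.normSq_eq_conj_mul_self, Complex.normSq_eq_conj_mul_self]
    linear_combination μ * conj (z₁ - h₂) * conj (z₂ - h₂) * hpolar
  replace key := congrArg Complex.re key
  simp only [Complex.add_re, Complex.re_ofReal_mul, Complex.zero_re] at key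
  have := mul_pos (Complex.normSq_pos.2 hne₂) (re_mul_sub_mul_conj_sub_pos hh₁ hh₂ hz₁)
  have := mul_pos (Complex.normSq_pos.2 hne₁) (re_mul_sub_mul_conj_sub_pos hh₁ hh₂ hz₂)
  linarith

theorem pbr_root_split (e₁ e₂ h₁ h₂ : ℂ)
    (he₁ : 0 < e₁.re) (he₂ : 0 < e₂.re) (hh₁ : h₁.re < 0) (hh₂ : h₂.re < 0) :
    e₁ + e₂ - h₁ - h₂ ≠ 0 ∧
    ∃ z₁ z₂ : ℂ, 0 < z₁.re ∧ z₂.re < 0 ∧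
      pbr ((X - C e₁) * (X - C e₂)) ((X - C h₁) * (X - C h₂)) =
        C (e₁ + e₂ - h₁ - h₂) * (X - C z₁) * (X - C z₂) := by
  set a := e₁ + e₂ - h₁ - h₂
  have ha : a ≠ 0 := fun h ↦ by
    have := congrArg Complex.re h
    simp only [a, Complex.sub_re, Complex.add_re, Complex.zero_re] at this
    linarith
  obtain ⟨z₁, z₂, hsum, hprod⟩ := exists_mul_add_eq_neg_and_mul_mul_eq ha
    (2 * (h₁ * h₂ - e₁ * e₂)) (e₁ * e₂ * (h₁ + h₂) - h₁ * h₂ * (e₁ + e₂))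
  have hpolar_h : (z₁ - h₁) * (z₂ - h₂) + (z₁ - h₂) * (z₂ - h₁) = 0 :=
    mul_left_cancel₀ ha (by linear_combination 2 * hprod - (h₁ + h₂) * hsum)
  have hpolar_e : (-z₁ - -e₁) * (-z₂ - -e₂) + (-z₁ - -e₂) * (-z₂ - -e₁) = 0 :=
    mul_left_cancel₀ ha (by linear_combination 2 * hprod - (e₁ + e₂) * hsum)
  have hfactor := (pbr_X_sub_C_mul_X_sub_C e₁ e₂ h₁ h₂).trans
    (quadratic_eq_C_mul_X_sub_C_mul_X_sub_C hsum hprod)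
  have hright := re_neg_or_re_neg_of_polar_eq_zero hh₁ hh₂ hpolar_h
  have hleft := re_neg_or_re_neg_of_polar_eq_zero (h₁ := -e₁) (h₂ := -e₂)
    (by simpa using he₁) (by simpa using he₂) hpolar_e
  simp only [Complex.neg_re, neg_lt_zero] at hleft
  refine ⟨ha, ?_⟩
  rcases hright with hz₁ | hz₂
  · exact ⟨z₂, z₁, hleft.resolve_left hz₁.not_gt, hz₁, hfactor.trans (by ring)⟩
  · exact ⟨z₁, z₂, hleft.resolve_right hz₂.not_gt, hz₂, hfactor⟩
end

section
/- Let p(x) = (x-e₁)(x-e₂) and q(x) = (x-h₁)(x-h₂) with Re e₁, Re e₂ > 0 and Re h₁, Re h₂ < 0. Then the polynomial [p,q] = p'q - pq' has no root on the imaginary axis (in particular no purely imaginary root), and its leading coefficient e₁+e₂-h₁-h₂ is nonzero. -/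
/-!
Away from the roots of `p` and `q`, `[p,q](z) = p(z) q(z) (p'(z)/p(z) - q'(z)/q(z))`, and
`p'/p = ∑ 1/(z - a)` over the roots `a` of `p`. If `z` lies strictly to the left of every root
of `p` and strictly to the right of every root of `q`, every `1/(z - a)` has negative real part
and every `1/(z - b)` positive real part, so the bracket cannot vanish at `z`.
-/

open Polynomial

namespace Complex

lemma inv_re_neg {w : ℂ} (hw : w.re < 0) : w⁻¹.re < 0 := by
  rw [inv_re]
  exact div_neg_of_neg_of_pos hw (normSq_pos.mpr fun h => by simp [h] at hw)

lemma inv_re_pos {w : ℂ} (hw : 0 < w.re) : 0 < w⁻¹.re := by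
  rw [inv_re]
  exact div_pos hw (normSq_pos.mpr fun h => by simp [h] at hw)

lemma re_multiset_sum (s : Multiset ℂ) : s.sum.re = (s.map re).sum :=
  map_multiset_sum reAddGroupHom s

lemma re_sum_one_div_sub_neg {z : ℂ} {s : Multiset ℂ} (hs : s ≠ 0)
    (h : ∀ a ∈ s, z.re < a.re) : (s.map fun a => 1 / (z - a)).sum.re < 0 := by
  rw [re_multiset_sum, Multiset.map_map]
  refine (Multiset.sum_lt_sum_of_nonempty (g := fun _ => 0) hs fun a ha => ?_).trans_eq (by simp)
  rw [Function.comp_apply, one_div]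
  exact inv_re_neg (by rw [sub_re]; linarith [h a ha])

lemma re_sum_one_div_sub_nonneg {z : ℂ} {s : Multiset ℂ}
    (h : ∀ b ∈ s, b.re < z.re) : 0 ≤ (s.map fun b => 1 / (z - b)).sum.re := by
  rw [re_multiset_sum, Multiset.map_map]
  refine Multiset.sum_nonneg fun x hx => ?_
  obtain ⟨b, hb, rfl⟩ := Multiset.mem_map.mp hx
  rw [Function.comp_apply, one_div]
  exact (inv_re_pos (by rw [sub_re]; linarith [h b hb])).le

end Complex

lemma eval_pbr_eq_mul_sum {p q : ℂ[X]} {z : ℂ} (hp : p.eval z ≠ 0) (hq : q.eval z ≠ 0) :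
    (pbr p q).eval z = p.eval z * q.eval z *
      ((p.roots.map fun a => 1 / (z - a)).sum - (q.roots.map fun b => 1 / (z - b)).sum) := by
  rw [pbr, eval_sub, eval_mul, eval_mul, (IsAlgClosed.splits p).eval_derivative_eq_eval_mul_sum hp,
    (IsAlgClosed.splits q).eval_derivative_eq_eval_mul_sum hq]
  ring

theorem eval_pbr_ne_zero_of_re_separates {p q : ℂ[X]} (hp : 0 < p.degree) (hq : q ≠ 0) {z : ℂ}
    (hpz : ∀ a ∈ p.roots, z.re < a.re) (hqz : ∀ b ∈ q.roots, b.re < z.re) :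
    (pbr p q).eval z ≠ 0 := by
  have hp0 : p ≠ 0 := ne_zero_of_degree_gt hp
  have hpz0 : p.eval z ≠ 0 := fun h => (hpz z ((mem_roots hp0).mpr h)).false
  have hqz0 : q.eval z ≠ 0 := fun h => (hqz z ((mem_roots hq).mpr h)).false
  have hroots : p.roots ≠ 0 :=
    (IsAlgClosed.splits p).roots_ne_zero (natDegree_pos_iff_degree_pos.mpr hp).ne'
  have hsum : ((p.roots.map fun a => 1 / (z - a)).sum
      - (q.roots.map fun b => 1 / (z - b)).sum).re < 0 := by
    rw [Complex.sub_re]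
    linarith [Complex.re_sum_one_div_sub_neg hroots hpz, Complex.re_sum_one_div_sub_nonneg hqz]
  rw [eval_pbr_eq_mul_sum hpz0 hqz0]
  exact mul_ne_zero (mul_ne_zero hpz0 hqz0)
    fun h => hsum.ne (by rw [h, Complex.zero_re])

lemma roots_X_sub_C_mul_X_sub_C (a b : ℂ) : ((X - C a) * (X - C b)).roots = {a, b} := by
  simp [roots_mul (mul_ne_zero (X_sub_C_ne_zero a) (X_sub_C_ne_zero b))]

theorem pbr_no_imaginary_root (e₁ e₂ h₁ h₂ : ℂ)
    (he₁ : 0 < e₁.re) (he₂ : 0 < e₂.re) (hh₁ : h₁.re < 0) (hh₂ : h₂.re < 0) :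
    (∀ z : ℂ, (pbr ((X - C e₁) * (X - C e₂)) ((X - C h₁) * (X - C h₂))).IsRoot z →
      z.re ≠ 0) ∧ e₁ + e₂ - h₁ - h₂ ≠ 0 := by
  refine ⟨fun z hz hz0 => eval_pbr_ne_zero_of_re_separates ?_ ?_ ?_ ?_ hz, fun h => ?_⟩
  · simp [degree_mul]
  · exact mul_ne_zero (X_sub_C_ne_zero h₁) (X_sub_C_ne_zero h₂)
  · simp [roots_X_sub_C_mul_X_sub_C, hz0, he₁, he₂]
  · simp [roots_X_sub_C_mul_X_sub_C, hz0, hh₁, hh₂]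
  · have := congrArg Complex.re h
    simp only [Complex.sub_re, Complex.add_re, Complex.zero_re] at this
    linarith
end

section
/- Let e₁, e₂ be complex numbers with positive real part and define sequences by a₀=e₁, b₀=e₂, a_{n+1} = (a_n+b_n)/2, b_{n+1} = 2a_nb_n/(a_n+b_n) (arithmetic-harmonic mean iteration). Then all a_n, b_n have positive real part, and the sequences a_n and b_n converge to a common limit. -/
/-!
The product `aₙ bₙ` is invariant, so with `s² = e₁ e₂` the normalised sequence `uₙ = aₙ / s`
satisfies Newton's iteration `uₙ₊₁ = (uₙ + uₙ⁻¹) / 2` for `√1`, and `bₙ = s uₙ⁻¹`. The Cayley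
transform `qₙ = (uₙ - 1) / (uₙ + 1)` squares at each step, and `‖q₀‖ < 1` once the sign of `s`
is chosen so that `Re (e₁ / s) > 0`; hence `qₙ → 0`, `uₙ → 1` and both sequences tend to `s`.
-/

open Filter Topology

namespace Complex

lemma add_ne_zero_of_re_pos {z w : ℂ} (hz : 0 < z.re) (hw : 0 < w.re) : z + w ≠ 0 :=
  ne_zero_of_re_pos (by rw [add_re]; positivity)

lemma re_inv_pos {z : ℂ} : 0 < z⁻¹.re ↔ 0 < z.re := by
  rcases eq_or_ne z 0 with rfl | hz
  · simp
  · rw [inv_re, div_pos_iff_of_pos_right (normSq_pos.2 hz)]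

lemma re_add_div_two_pos {z w : ℂ} (hz : 0 < z.re) (hw : 0 < w.re) : 0 < ((z + w) / 2).re := by
  rw [div_ofNat_re, add_re]
  positivity

lemma re_two_mul_mul_div_add_pos {z w : ℂ} (hz : 0 < z.re) (hw : 0 < w.re) :
    0 < (2 * z * w / (z + w)).re := by
  have hz0 := ne_zero_of_re_pos hz
  have hw0 := ne_zero_of_re_pos hw
  have hharm : 2 * z * w / (z + w) = ((z⁻¹ + w⁻¹) / 2)⁻¹ := by
    field_simp
    ring
  rw [hharm, re_inv_pos]
  exact re_add_div_two_pos (re_inv_pos.2 hz) (re_inv_pos.2 hw)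

lemma norm_sub_one_lt_norm_add_one {u : ℂ} (hu : 0 < u.re) : ‖u - 1‖ < ‖u + 1‖ := by
  rw [← sq_lt_sq₀ (norm_nonneg _) (norm_nonneg _), Complex.sq_norm, Complex.sq_norm, normSq_sub,
    normSq_add]
  simp only [map_one, mul_one]
  linarith

lemma cayley_newton_step {u : ℂ} (hu : u ≠ 0) :
    ((u + u⁻¹) / 2 - 1) / ((u + u⁻¹) / 2 + 1) = ((u - 1) / (u + 1)) ^ 2 := by
  rw [show (u + u⁻¹) / 2 - 1 = (u - 1) ^ 2 / (2 * u) by field_simp; ring,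
    show (u + u⁻¹) / 2 + 1 = (u + 1) ^ 2 / (2 * u) by field_simp; ring,
    div_div_div_cancel_right₀ (mul_ne_zero two_ne_zero hu), div_pow]

theorem tendsto_one_of_newton {u : ℕ → ℂ} (hu : ∀ n, u (n + 1) = (u n + (u n)⁻¹) / 2)
    (h0 : 0 < (u 0).re) : Tendsto u atTop (𝓝 1) := by
  have hpos : ∀ n, 0 < (u n).re := by
    intro n
    induction n with
    | zero => exact h0
    | succ n ih => rw [hu]; exact re_add_div_two_pos ih (re_inv_pos.2 ih)
  have hu_add_one (n : ℕ) : u n + 1 ≠ 0 := add_ne_zero_of_re_pos (hpos n) (by simp)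
  obtain ⟨q, hq⟩ : ∃ q : ℕ → ℂ, ∀ n, q n = (u n - 1) / (u n + 1) := ⟨_, fun _ => rfl⟩
  have hq_pow (n : ℕ) : q n = q 0 ^ 2 ^ n := by
    induction n with
    | zero => simp
    | succ n ih =>
      rw [hq, hu, cayley_newton_step (ne_zero_of_re_pos (hpos n)), ← hq, ih, ← pow_mul, pow_succ]
  have hq0 : ‖q 0‖ < 1 := by
    rw [hq, norm_div, div_lt_one (norm_pos_iff.2 (hu_add_one 0))]
    exact norm_sub_one_lt_norm_add_one h0
  have hq_lim : Tendsto q atTop (𝓝 0) := by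
    rw [funext hq_pow]
    exact (tendsto_pow_atTop_nhds_zero_of_norm_lt_one hq0).comp
      (tendsto_pow_atTop_atTop_of_one_lt one_lt_two)
  have hu_eq : u = fun n => (1 + q n) / (1 - q n) := by
    funext n
    have := hu_add_one n
    rw [hq]
    field_simp
    ring
  have h : Tendsto (fun n => (1 + q n) / (1 - q n)) atTop (𝓝 ((1 + 0) / (1 - 0))) :=
    (tendsto_const_nhds.add hq_lim).div (tendsto_const_nhds.sub hq_lim) (by norm_num)
  rwa [add_zero, sub_zero, div_one, ← hu_eq] at h

lemma exists_sq_eq_mul_re_div_pos {z w : ℂ} (hz : 0 < z.re) (hw : 0 < w.re) :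
    ∃ s, s ^ 2 = z * w ∧ 0 < (z / s).re := by
  obtain ⟨t, ht⟩ := IsAlgClosed.exists_pow_nat_eq (z * w) two_pos
  have ht0 : t ≠ 0 := by
    rintro rfl
    exact mul_ne_zero (ne_zero_of_re_pos hz) (ne_zero_of_re_pos hw) (by simpa using ht.symm)
  obtain ⟨v, hv⟩ : ∃ v, v = z / t := ⟨_, rfl⟩
  have hz_eq : z = v ^ 2 * w := by
    rw [hv]
    field_simp
    rw [ht]
    ring
  -- `z / w = (z / t) ^ 2` is not a nonpositive real, so `z / t` is not purely imaginary.
  have hre : v.re ≠ 0 := by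
    intro h0
    have : z.re = -(v.im ^ 2 * w.re) := by
      rw [hz_eq]
      simp only [sq, mul_re, mul_im, h0]
      ring
    nlinarith [mul_nonneg (sq_nonneg v.im) hw.le]
  rcases hre.lt_or_gt with hneg | hpos
  · exact ⟨-t, by rw [neg_sq, ht], by rw [div_neg, neg_re, ← hv]; linarith⟩
  · exact ⟨t, ht, hv ▸ hpos⟩

end Complex

open Complex

section ArithmeticHarmonicMean

variable {a b : ℕ → ℂ}

lemma ahm_re_pos (ha : ∀ n, a (n + 1) = (a n + b n) / 2)
    (hb : ∀ n, b (n + 1) = 2 * a n * b n / (a n + b n))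
    (ha0 : 0 < (a 0).re) (hb0 : 0 < (b 0).re) (n : ℕ) :
    0 < (a n).re ∧ 0 < (b n).re := by
  induction n with
  | zero => exact ⟨ha0, hb0⟩
  | succ n ih =>
    rw [ha, hb]
    exact ⟨re_add_div_two_pos ih.1 ih.2, re_two_mul_mul_div_add_pos ih.1 ih.2⟩

lemma ahm_mul_eq (ha : ∀ n, a (n + 1) = (a n + b n) / 2)
    (hb : ∀ n, b (n + 1) = 2 * a n * b n / (a n + b n)) (hab : ∀ n, a n + b n ≠ 0) (n : ℕ) :
    a n * b n = a 0 * b 0 := by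
  induction n with
  | zero => rfl
  | succ n ih =>
    have := hab n
    rw [ha, hb, ← ih]
    field_simp

end ArithmeticHarmonicMean

theorem ahm_converges (e₁ e₂ : ℂ) (he₁ : 0 < e₁.re) (he₂ : 0 < e₂.re)
    (a b : ℕ → ℂ) (ha0 : a 0 = e₁) (hb0 : b 0 = e₂)
    (ha : ∀ n, a (n + 1) = (a n + b n) / 2)
    (hb : ∀ n, b (n + 1) = 2 * a n * b n / (a n + b n)) :
    (∀ n, 0 < (a n).re ∧ 0 < (b n).re) ∧
    ∃ L : ℂ, Tendsto a atTop (nhds L) ∧ Tendsto b atTop (nhds L) := by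
  subst ha0 hb0
  have hpos := ahm_re_pos ha hb he₁ he₂
  refine ⟨hpos, ?_⟩
  obtain ⟨s, hs, hs_re⟩ := exists_sq_eq_mul_re_div_pos he₁ he₂
  have hs0 : s ≠ 0 := by rintro rfl; simp at hs_re
  have hprod (n : ℕ) : a n * b n = s ^ 2 :=
    hs ▸ ahm_mul_eq ha hb (fun k => add_ne_zero_of_re_pos (hpos k).1 (hpos k).2) n
  have hb_eq (n : ℕ) : b n = s * (a n / s)⁻¹ := by
    have := ne_zero_of_re_pos (hpos n).1
    rw [inv_div, mul_div, ← sq, ← hprod n]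
    field_simp
  have hu : Tendsto (fun n => a n / s) atTop (𝓝 1) := by
    refine tendsto_one_of_newton (fun n => ?_) hs_re
    rw [ha, hb_eq]
    field_simp
  refine ⟨s, ?_, ?_⟩
  · simpa [mul_div_cancel₀ _ hs0] using hu.const_mul s
  · rw [funext hb_eq]
    simpa using (hu.inv₀ one_ne_zero).const_mul s
end

section
/- Let t ∈ ℂ with Re t > 0. Then for all n ≥ 0, the pair obtained after n steps of the arithmetic-harmonic mean iteration started from (s·tanh(t), s·coth(t)) (for fixed s ∈ ℂ) equals, up to transposition, (s·tanh(2ⁿt), s·coth(2ⁿt)). In particular, since Re t > 0, both components tend to s as n → ∞. -/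
/-!
Since `tanh z * coth z = 1`, the harmonic mean of `s tanh z` and `s coth z` is
`s * 2 / (tanh z + coth z) = s tanh 2z`, while their arithmetic mean is `s coth 2z`: one step of
the iteration doubles `z` and swaps the two roles. Both `tanh z` and `coth z` are Möbius
transforms of `exp (-2z)`, which tends to `0` as `Re z → ∞`, so both tend to `1` along `2ⁿ t`.
-/

open Filter Complex

/-- Hyperbolic cotangent on `ℂ`. -/
noncomputable def ccoth (z : ℂ) : ℂ := Complex.cosh z / Complex.sinh z

open Topology

namespace Complex

theorem norm_exp_neg_lt_norm_exp {z : ℂ} (hz : 0 < z.re) : ‖exp (-z)‖ < ‖exp z‖ := by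
  rw [norm_exp, norm_exp, neg_re]
  exact Real.exp_lt_exp.2 (by linarith)

theorem sinh_ne_zero_of_re_pos {z : ℂ} (hz : 0 < z.re) : sinh z ≠ 0 := by
  intro h
  have hexp : exp z = exp (-z) := sub_eq_zero.1 (by rw [← two_sinh, h, mul_zero])
  exact (norm_exp_neg_lt_norm_exp hz).ne (by rw [hexp])

theorem cosh_ne_zero_of_re_pos {z : ℂ} (hz : 0 < z.re) : cosh z ≠ 0 := by
  intro h
  have hexp : exp z = -exp (-z) := eq_neg_of_add_eq_zero_left (by rw [← two_cosh, h, mul_zero])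
  exact (norm_exp_neg_lt_norm_exp hz).ne (by rw [hexp, norm_neg])

theorem two_cosh_eq_exp_mul (z : ℂ) : 2 * cosh z = exp z * (1 + exp (-2 * z)) := by
  rw [two_cosh, mul_add, ← exp_add]
  ring_nf

theorem two_sinh_eq_exp_mul (z : ℂ) : 2 * sinh z = exp z * (1 - exp (-2 * z)) := by
  rw [two_sinh, mul_sub, ← exp_add]
  ring_nf

theorem tanh_eq_exp_neg_two_mul (z : ℂ) :
    tanh z = (1 - exp (-2 * z)) / (1 + exp (-2 * z)) := by
  rw [tanh_eq_sinh_div_cosh, ← mul_div_mul_left _ _ two_ne_zero, two_sinh_eq_exp_mul,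
    two_cosh_eq_exp_mul, mul_div_mul_left _ _ (exp_ne_zero z)]

theorem tendsto_exp_neg_two_mul_comap_re_atTop :
    Tendsto (fun z : ℂ => exp (-2 * z)) (comap re atTop) (𝓝 0) := by
  refine tendsto_exp_comap_re_atBot.comp (tendsto_comap_iff.2 ?_)
  have h : Tendsto (fun z : ℂ => -2 * z.re) (comap re atTop) atBot :=
    tendsto_comap.const_mul_atTop_of_neg (by norm_num)
  simpa [Function.comp_def] using h

theorem tendsto_tanh_comap_re_atTop : Tendsto tanh (comap re atTop) (𝓝 1) := by
  have h := tendsto_exp_neg_two_mul_comap_re_atTop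
  rw [funext tanh_eq_exp_neg_two_mul]
  simpa [Pi.div_def] using (tendsto_const_nhds (x := (1 : ℂ))).sub h |>.div
    (tendsto_const_nhds.add h) (by norm_num : (1 : ℂ) + 0 ≠ 0)

theorem re_two_pow_mul (n : ℕ) (t : ℂ) : ((2 : ℂ) ^ n * t).re = 2 ^ n * t.re := by
  rw [← ofReal_ofNat, ← ofReal_pow, re_ofReal_mul]

theorem tendsto_two_pow_mul_comap_re_atTop {t : ℂ} (ht : 0 < t.re) :
    Tendsto (fun n : ℕ => (2 : ℂ) ^ n * t) atTop (comap re atTop) := by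
  refine tendsto_comap_iff.2 ?_
  simp only [Function.comp_def, re_two_pow_mul]
  exact (tendsto_pow_atTop_atTop_of_one_lt one_lt_two).atTop_mul_const ht

end Complex

theorem ccoth_eq_exp_neg_two_mul (z : ℂ) :
    ccoth z = (1 + exp (-2 * z)) / (1 - exp (-2 * z)) := by
  rw [ccoth, ← mul_div_mul_left _ _ two_ne_zero, two_sinh_eq_exp_mul,
    two_cosh_eq_exp_mul, mul_div_mul_left _ _ (exp_ne_zero z)]

theorem tendsto_ccoth_comap_re_atTop : Tendsto ccoth (comap re atTop) (𝓝 1) := by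
  have h := tendsto_exp_neg_two_mul_comap_re_atTop
  rw [funext ccoth_eq_exp_neg_two_mul]
  simpa [Pi.div_def] using (tendsto_const_nhds (x := (1 : ℂ))).add h |>.div
    (tendsto_const_nhds.sub h) (by norm_num : (1 : ℂ) - 0 ≠ 0)

theorem tanh_mul_ccoth {z : ℂ} (hs : sinh z ≠ 0) (hc : cosh z ≠ 0) : tanh z * ccoth z = 1 := by
  rw [tanh_eq_sinh_div_cosh, ccoth, div_mul_div_comm, mul_comm, div_self (mul_ne_zero hc hs)]

theorem ccoth_two_mul {z : ℂ} (hs : sinh z ≠ 0) (hc : cosh z ≠ 0) :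
    ccoth (2 * z) = (tanh z + ccoth z) / 2 := by
  rw [tanh_eq_sinh_div_cosh, ccoth, ccoth, sinh_two_mul, cosh_two_mul]
  field_simp
  ring

theorem tanh_two_mul_eq_two_div {z : ℂ} (hs : sinh z ≠ 0) (hc : cosh z ≠ 0) :
    tanh (2 * z) = 2 / (tanh z + ccoth z) := by
  rw [tanh_eq_sinh_div_cosh, tanh_eq_sinh_div_cosh, ccoth, sinh_two_mul, cosh_two_mul,
    div_add_div _ _ hc hs, div_div_eq_mul_div]
  ring

theorem harmonic_mean_smul_of_mul_eq_one {K : Type*} [Field K] {x y : K} (hxy : x * y = 1)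
    (s : K) : 2 * (s * x) * (s * y) / (s * x + s * y) = s * (2 / (x + y)) := by
  rcases eq_or_ne s 0 with rfl | hs
  · simp
  rw [show 2 * (s * x) * (s * y) = s * (s * 2) by linear_combination 2 * s ^ 2 * hxy, ← mul_add,
    mul_div_mul_left _ _ hs, mul_div_assoc]

def IsScaledTanhCoth (s z x y : ℂ) : Prop :=
  (x = s * tanh z ∧ y = s * ccoth z) ∨ (x = s * ccoth z ∧ y = s * tanh z)

theorem IsScaledTanhCoth.arith_harm_mean {s z x y : ℂ} (hs : sinh z ≠ 0) (hc : cosh z ≠ 0)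
    (h : IsScaledTanhCoth s z x y) :
    IsScaledTanhCoth s (2 * z) ((x + y) / 2) (2 * x * y / (x + y)) := by
  suffices IsScaledTanhCoth s (2 * z) ((s * tanh z + s * ccoth z) / 2)
      (2 * (s * tanh z) * (s * ccoth z) / (s * tanh z + s * ccoth z)) by
    rcases h with ⟨rfl, rfl⟩ | ⟨rfl, rfl⟩
    · exact this
    · rwa [add_comm (s * ccoth z), mul_right_comm 2 (s * ccoth z)]
  right
  constructor
  · rw [ccoth_two_mul hs hc]
    ring
  · rw [harmonic_mean_smul_of_mul_eq_one (tanh_mul_ccoth hs hc), tanh_two_mul_eq_two_div hs hc]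

theorem Filter.Tendsto.of_forall_eq_or_eq {ι α : Type*} {l : Filter ι} {l' : Filter α}
    {f g u : ι → α} (hf : Tendsto f l l') (hg : Tendsto g l l')
    (h : ∀ i, u i = f i ∨ u i = g i) : Tendsto u l l' := fun U hU => by
  rw [mem_map]
  filter_upwards [hf hU, hg hU] with i hfi hgi
  rcases h i with hi | hi <;> rwa [Set.mem_preimage, hi]

theorem ahm_tanh_coth (t : ℂ) (ht : 0 < t.re) (s : ℂ) (a b : ℕ → ℂ)
    (ha0 : a 0 = s * Complex.tanh t) (hb0 : b 0 = s * ccoth t)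
    (ha : ∀ n, a (n + 1) = (a n + b n) / 2)
    (hb : ∀ n, b (n + 1) = 2 * a n * b n / (a n + b n)) :
    (∀ n : ℕ,
      (a n = s * Complex.tanh ((2 : ℂ) ^ n * t) ∧ b n = s * ccoth ((2 : ℂ) ^ n * t)) ∨
      (a n = s * ccoth ((2 : ℂ) ^ n * t) ∧ b n = s * Complex.tanh ((2 : ℂ) ^ n * t))) ∧
    Tendsto a atTop (nhds s) ∧ Tendsto b atTop (nhds s) := by
  have hre (n : ℕ) : 0 < ((2 : ℂ) ^ n * t).re := by
    rw [re_two_pow_mul]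
    positivity
  have hpair (n : ℕ) : IsScaledTanhCoth s ((2 : ℂ) ^ n * t) (a n) (b n) := by
    induction n with
    | zero => exact Or.inl (by simpa using ⟨ha0, hb0⟩)
    | succ n ih =>
      rw [ha, hb, pow_succ', mul_assoc]
      exact ih.arith_harm_mean (sinh_ne_zero_of_re_pos (hre n)) (cosh_ne_zero_of_re_pos (hre n))
  have hz := tendsto_two_pow_mul_comap_re_atTop ht
  have htanh : Tendsto (fun n => s * tanh ((2 : ℂ) ^ n * t)) atTop (𝓝 s) := by
    simpa using (tendsto_tanh_comap_re_atTop.comp hz).const_mul s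
  have hcoth : Tendsto (fun n => s * ccoth ((2 : ℂ) ^ n * t)) atTop (𝓝 s) := by
    simpa using (tendsto_ccoth_comap_re_atTop.comp hz).const_mul s
  exact ⟨hpair, htanh.of_forall_eq_or_eq hcoth fun n => (hpair n).imp And.left And.left,
    hcoth.of_forall_eq_or_eq htanh fun n => (hpair n).imp And.right And.right⟩
end
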